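/- Let T be a tree on a finite, nonempty, linearly ordered vertex type V, let m ≥ 1 be an integer, and let S be the m-order subdivision of T. Then for every edge e of T, the distance in S between two inserted vertices on e satisfies dist_S(inr(e,i), inr(e,j)) = |i − j| for all i, j in Fin m, and consequently half the sum over all ordered pairs (i,j) in Fin m × Fin m of dist_S(inr(e,i), inr(e,j)) equals C(m+1,3) = (m+1)m(m−1)/6. -/

import Mathlib

/-- The `m`-order subdivision of a graph `T` on a linearly ordered vertex type:
every edge of `T` is replaced by a path of length `m + 1` through `m` new vertices. -/
def mSubdivision {V : Type*} [LinearOrder V] (T : SimpleGraph V) (m : ℕ) :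
    SimpleGraph (V ⊕ (T.edgeSet × Fin m)) :=
  SimpleGraph.fromRel (fun x y =>
    match x, y with
    | Sum.inl u, Sum.inr (e, i) =>
        (i.val = 0 ∧ u = Sym2.inf e.1) ∨ (i.val = m - 1 ∧ u = Sym2.sup e.1)
    | Sum.inr (e, i), Sum.inr (e', j) => e = e' ∧ i.val + 1 = j.val
    | _, _ => False)

/-!
The inserted vertices of `e` form a path, so their distance is at most `|i - j|`. For the
lower bound, let `v` be the larger endpoint of `e` and take the potential `proximity v`: it is
`m + 1` at `v`, drops by one per step along each subdivided edge leaving `v`, and vanishes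
elsewhere. It changes by at most one across every edge of the subdivision, so it bounds
distances from below, and on the inserted vertex `(e, i)` it equals `i + 1`.
-/

open Finset

theorem Sym2.inf_ne_sup_of_not_isDiag {α : Type*} [LinearOrder α] {s : Sym2 α}
    (h : ¬s.IsDiag) : s.inf ≠ s.sup := by
  induction s with
  | _ a b => exact (min_lt_max.mpr (by simpa using h)).ne

namespace SimpleGraph

variable {α : Type*} {G : SimpleGraph α} (f : α → ℤ)

theorem Walk.abs_sub_le_length (hf : ∀ ⦃x y⦄, G.Adj x y → |f x - f y| ≤ 1) {x y : α}
    (p : G.Walk x y) : |f x - f y| ≤ p.length := by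
  induction p with
  | nil => simp
  | @cons x z y h p ih =>
    calc |f x - f y| ≤ |f x - f z| + |f z - f y| := abs_sub_le _ _ _
      _ ≤ 1 + p.length := add_le_add (hf h) ih
      _ = (cons h p).length := by rw [length_cons]; push_cast; ring

theorem Reachable.abs_sub_le_dist (hf : ∀ ⦃x y⦄, G.Adj x y → |f x - f y| ≤ 1) {x y : α}
    (hxy : G.Reachable x y) : |f x - f y| ≤ G.dist x y := by
  obtain ⟨p, hp⟩ := hxy.exists_walk_length_eq_dist
  exact hp ▸ p.abs_sub_le_length f hf

end SimpleGraph

namespace mSubdivision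

variable {V : Type*} [LinearOrder V] {T : SimpleGraph V} {m : ℕ}

theorem adj_inr_inr_of_succ_eq (e : T.edgeSet) {i j : Fin m} (h : i.val + 1 = j.val) :
    (mSubdivision T m).Adj (.inr (e, i)) (.inr (e, j)) := by
  refine SimpleGraph.fromRel_adj _ _ _ |>.mpr ⟨?_, .inl ⟨rfl, h⟩⟩
  simp only [ne_eq, Sum.inr.injEq, Prod.mk.injEq, true_and]
  omega

theorem exists_walk_inr_inr (e : T.edgeSet) (d : ℕ) :
    ∀ i j : Fin m, i.val + d = j.val →
      ∃ p : (mSubdivision T m).Walk (.inr (e, i)) (.inr (e, j)), p.length = d := by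
  induction d with
  | zero =>
    intro i j h
    obtain rfl : i = j := Fin.ext h
    exact ⟨.nil, rfl⟩
  | succ d ih =>
    intro i j h
    obtain ⟨p, hp⟩ := ih ⟨i + 1, by omega⟩ j (by simp only; omega)
    exact ⟨.cons (adj_inr_inr_of_succ_eq e rfl) p, by simp [hp]⟩

variable (T m) in
def proximity (v : V) : V ⊕ (T.edgeSet × Fin m) → ℤ
  | .inl u => if u = v then m + 1 else 0
  | .inr (e, k) => if e.1.sup = v then k + 1 else if e.1.inf = v then m - k else 0

theorem abs_proximity_inl_sub_inr_le_one (v : V) {u : V} {e : T.edgeSet} {k : Fin m}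
    (h : k.val = 0 ∧ u = e.1.inf ∨ k.val = m - 1 ∧ u = e.1.sup) :
    |proximity T m v (.inl u) - proximity T m v (.inr (e, k))| ≤ 1 := by
  have hne : e.1.inf ≠ e.1.sup :=
    Sym2.inf_ne_sup_of_not_isDiag (T.not_isDiag_of_mem_edgeSet e.2)
  rcases h with ⟨hk, rfl⟩ | ⟨hk, rfl⟩ <;> simp only [proximity] <;> split_ifs <;>
    first
    | exact absurd (‹e.1.inf = v›.trans ‹e.1.sup = v›.symm) hne
    | (rw [abs_le]; omega)

theorem abs_proximity_inr_sub_inr_le_one (v : V) (e : T.edgeSet) {k k' : Fin m}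
    (h : k.val + 1 = k'.val) :
    |proximity T m v (.inr (e, k)) - proximity T m v (.inr (e, k'))| ≤ 1 := by
  simp only [proximity]
  split_ifs <;> rw [abs_le] <;> omega

theorem abs_proximity_sub_le_one (v : V) ⦃x y : V ⊕ (T.edgeSet × Fin m)⦄
    (h : (mSubdivision T m).Adj x y) : |proximity T m v x - proximity T m v y| ≤ 1 := by
  rcases (SimpleGraph.fromRel_adj _ _ _).mp h with ⟨-, h | h⟩ <;>
    [skip; rw [abs_sub_comm]] <;>
    rcases x with u | ⟨e, k⟩ <;> rcases y with w | ⟨e', k'⟩ <;> simp only at h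
  all_goals first
    | exact abs_proximity_inl_sub_inr_le_one v h
    | (obtain ⟨rfl, hk⟩ := h; exact abs_proximity_inr_sub_inr_le_one v _ hk)

theorem dist_inr_inr_of_le (e : T.edgeSet) {i j : Fin m} (hij : i ≤ j) :
    ((mSubdivision T m).dist (.inr (e, i)) (.inr (e, j)) : ℤ) = j - i := by
  obtain ⟨p, hp⟩ := exists_walk_inr_inr e (j - i) i j (by omega)
  have hle : (mSubdivision T m).dist (.inr (e, i)) (.inr (e, j)) ≤ j - i :=
    hp ▸ SimpleGraph.dist_le p
  have hge := p.reachable.abs_sub_le_dist _ (abs_proximity_sub_le_one e.1.sup)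
  simp only [proximity, if_pos] at hge
  rw [abs_sub_comm, abs_of_nonneg (by omega)] at hge
  omega

theorem dist_inr_inr (e : T.edgeSet) (i j : Fin m) :
    ((mSubdivision T m).dist (.inr (e, i)) (.inr (e, j)) : ℤ) = |(i : ℤ) - j| := by
  rcases le_total i j with hij | hji
  · rw [dist_inr_inr_of_le e hij, abs_sub_comm, abs_of_nonneg (by omega)]
  · rw [SimpleGraph.dist_comm, dist_inr_inr_of_le e hji, abs_of_nonneg (by omega)]

end mSubdivision

section

variable {K : Type*} [Field K] [LinearOrder K] [IsStrictOrderedRing K]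

theorem sum_range_abs_natCast_sub (n : ℕ) :
    ∑ j ∈ range n, |(n : K) - j| = n * (n + 1) / 2 := by
  induction n with
  | zero => simp
  | succ n ih =>
    rw [sum_range_succ']
    push_cast
    simp only [add_sub_add_right_eq_sub, ih, sub_zero]
    rw [abs_of_pos (by positivity)]
    ring

theorem sum_range_sum_range_abs_natCast_sub (n : ℕ) :
    ∑ i ∈ range n, ∑ j ∈ range n, |(i : K) - j| = (n + 1) * n * (n - 1) / 3 := by
  induction n with
  | zero => simp
  | succ n ih =>
    simp only [sum_range_succ, sum_add_distrib, ih, sub_self, abs_zero, add_zero]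
    simp only [abs_sub_comm _ (n : K), sum_range_abs_natCast_sub]
    push_cast
    ring

end

theorem dist_mSubdivision_inserted_general {V : Type*} [LinearOrder V]
    (T : SimpleGraph V) (m : ℕ) (e : T.edgeSet) :
    (∀ i j : Fin m,
        ((mSubdivision T m).dist (Sum.inr (e, i)) (Sum.inr (e, j)) : ℤ) =
          |(i : ℤ) - (j : ℤ)|) ∧
      (∑ i : Fin m, ∑ j : Fin m,
          ((mSubdivision T m).dist (Sum.inr (e, i)) (Sum.inr (e, j)) : ℚ)) / 2 =
        ((m : ℚ) + 1) * (m : ℚ) * ((m : ℚ) - 1) / 6 := by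
  refine ⟨mSubdivision.dist_inr_inr e, ?_⟩
  have hcast (i j : Fin m) :
      ((mSubdivision T m).dist (.inr (e, i)) (.inr (e, j)) : ℚ) = |(i : ℚ) - j| := by
    exact_mod_cast mSubdivision.dist_inr_inr e i j
  have hrange : ∑ i : Fin m, ∑ j : Fin m, |(i : ℚ) - j| =
      ∑ i ∈ range m, ∑ j ∈ range m, |(i : ℚ) - j| := by
    rw [← Fin.sum_univ_eq_sum_range (fun i => ∑ j ∈ range m, |(i : ℚ) - j|)]
    exact Finset.sum_congr rfl fun i _ => Fin.sum_univ_eq_sum_range (fun j => |(i : ℚ) - j|) m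
  simp only [hcast]
  rw [hrange, sum_range_sum_range_abs_natCast_sub]
  ring

theorem dist_mSubdivision_inserted {V : Type*} [Fintype V] [LinearOrder V] [Nonempty V]
    (T : SimpleGraph V) (hT : T.IsTree) (m : ℕ) (hm : 1 ≤ m) (e : T.edgeSet) :
    (∀ i j : Fin m,
        ((mSubdivision T m).dist (Sum.inr (e, i)) (Sum.inr (e, j)) : ℤ) =
          |(i : ℤ) - (j : ℤ)|) ∧
      (∑ i : Fin m, ∑ j : Fin m,
          ((mSubdivision T m).dist (Sum.inr (e, i)) (Sum.inr (e, j)) : ℚ)) / 2 =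
        ((m : ℚ) + 1) * (m : ℚ) * ((m : ℚ) - 1) / 6 :=
  dist_mSubdivision_inserted_general T m e
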